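/- arXiv:1204.0849 — 5 statements merged into one kernel-verified Lean document; each statement's English description precedes it below -/
import Mathlib

section
/- For any two points x, y in the hypergrid [k]^n and parameters α ≤ β, the shortest-path distance d(x,y) in the directed grid graph (where edges increasing one coordinate by 1 have length -α and edges decreasing one coordinate by 1 have length β) equals β·‖x - hcd(x,y)‖₁ - α·‖y - hcd(x,y)‖₁, where hcd(x,y) is the coordinatewise minimum of x and y. -/
/-- membership in the hypergrid `[k]^n` (coordinates in `{1,…,k}`). -/
def inGrid {n : ℕ} (k : ℕ) (x : Fin n → ℤ) : Prop := ∀ i, 1 ≤ x i ∧ x i ≤ (k : ℤ)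

/-- coordinatewise minimum. -/
def hcd {n : ℕ} (x y : Fin n → ℤ) : Fin n → ℤ := fun i => min (x i) (y i)

/-- the closed-form pseudo-distance `β‖x - hcd(x,y)‖₁ - α‖y - hcd(x,y)‖₁`. -/
noncomputable def gd {n : ℕ} (α β : ℝ) (x y : Fin n → ℤ) : ℝ :=
  β * ∑ i, ((x i - hcd x y i : ℤ) : ℝ) - α * ∑ i, ((y i - hcd x y i : ℤ) : ℝ)

/-- adjacency in the grid graph: `ℓ₁` distance exactly `1`. -/
def adj {n : ℕ} (x y : Fin n → ℤ) : Prop := (∑ i, |x i - y i|) = 1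

/-- length of a single step: `-α` if it increases a coordinate, `β` if it decreases one. -/
noncomputable def stepLen {n : ℕ} (α β : ℝ) (x y : Fin n → ℤ) : ℝ :=
  if (∀ i, x i ≤ y i) then -α else β

/-- total length of a directed path. -/
noncomputable def pathLen {n : ℕ} (α β : ℝ) : List (Fin n → ℤ) → ℝ
  | x :: y :: rest => stepLen α β x y + pathLen α β (y :: rest)
  | _ => 0

/-
For fixed `y`, `gd α β · y` is a potential for the edge lengths: it vanishes at `y`, and along
an edge that moves coordinate `j` by one it drops by exactly the edge length when `x j` moves
toward `y j`, and by `β - α ≥ 0` less otherwise. Telescoping along a path gives the lower bound;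
the path that moves one coordinate at a time toward `y` stays in the box between `x` and `y`,
hence in the grid, and attains it.
-/

open Function

theorem Fintype.sum_apply_update_add {ι α M : Type*} [Fintype ι] [DecidableEq ι] [AddCommMonoid M]
    (F : ι → α → M) (x : ι → α) (j : ι) (c : α) :
    ∑ i, F i (update x j c i) + F j (x j) = ∑ i, F i (x i) + F j c := by
  simp_rw [apply_update F]
  rw [Finset.sum_update_of_mem (Finset.mem_univ j),
    Finset.sum_eq_add_sum_sdiff_singleton_of_mem (Finset.mem_univ j)]
  abel

section Line

variable (α β : ℝ) {a b c : ℤ}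

noncomputable def lineDist (a b : ℤ) : ℝ :=
  β * ((a - min a b : ℤ) : ℝ) - α * ((b - min a b : ℤ) : ℝ)

theorem lineDist_le_step (hαβ : α ≤ β) (h : |a - c| = 1) :
    lineDist α β a b ≤ (if a ≤ c then -α else β) + lineDist α β c b := by
  rcases (abs_eq zero_le_one).mp h with h | h
  · obtain rfl : c = a - 1 := by omega
    rcases lt_or_ge b a with hab | hab
    · rw [lineDist, lineDist, min_eq_right hab.le, min_eq_right (by omega), if_neg (by omega)]
      push_cast; linarith
    · rw [lineDist, lineDist, min_eq_left hab, min_eq_left (by omega), if_neg (by omega)]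
      push_cast; linarith
  · obtain rfl : c = a + 1 := by omega
    rcases lt_or_ge a b with hab | hab
    · rw [lineDist, lineDist, min_eq_left hab.le, min_eq_left (by omega), if_pos (by omega)]
      push_cast; linarith
    · rw [lineDist, lineDist, min_eq_right hab, min_eq_right (by omega), if_pos (by omega)]
      push_cast; linarith

theorem lineDist_eq_step (h : |a - c| = 1) (hc : min a b ≤ c) (hc' : c ≤ max a b) :
    lineDist α β a b = (if a ≤ c then -α else β) + lineDist α β c b := by
  rcases (abs_eq zero_le_one).mp h with h | h
  · obtain rfl : c = a - 1 := by omega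
    rw [lineDist, lineDist, min_eq_right (by omega), min_eq_right (by omega), if_neg (by omega)]
    push_cast; ring
  · obtain rfl : c = a + 1 := by omega
    rw [lineDist, lineDist, min_eq_left (by omega), min_eq_left (by omega), if_pos (by omega)]
    push_cast; ring

theorem exists_unit_step_between (h : a ≠ b) : ∃ c, |a - c| = 1 ∧ min a b ≤ c ∧ c ≤ max a b := by
  rcases h.lt_or_gt with hab | hab
  · exact ⟨a + 1, by simp, by omega, by omega⟩
  · exact ⟨a - 1, by simp, by omega, by omega⟩

end Line

section Grid

variable {n : ℕ} (α β : ℝ) {x y z : Fin n → ℤ}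

theorem gd_eq_sum_lineDist : gd α β x y = ∑ i, lineDist α β (x i) (y i) := by
  simp only [gd, hcd, lineDist, Finset.mul_sum, Finset.sum_sub_distrib]

theorem gd_self : gd α β x x = 0 := by
  simp [gd, hcd]

theorem gd_update_add (j : Fin n) (c : ℤ) :
    gd α β (update x j c) y + lineDist α β (x j) (y j) = gd α β x y + lineDist α β c (y j) := by
  simp only [gd_eq_sum_lineDist]
  exact Fintype.sum_apply_update_add (fun i a => lineDist α β a (y i)) x j c

theorem stepLen_update (j : Fin n) (c : ℤ) :
    stepLen α β x (update x j c) = if x j ≤ c then -α else β := by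
  simp [stepLen, forall_update_iff]

theorem adj_iff_exists_update : adj x z ↔ ∃ j c, |x j - c| = 1 ∧ z = update x j c := by
  constructor
  · intro h
    obtain ⟨j, hj⟩ : ∃ j, x j ≠ z j := by
      by_contra! hxz
      simp [adj, hxz] at h
    have hsplit := Finset.add_sum_erase Finset.univ (fun i => |x i - z i|) (Finset.mem_univ j)
    have hrest : 0 ≤ ∑ i ∈ Finset.univ.erase j, |x i - z i| := by positivity
    have hjpos : 0 < |x j - z j| := abs_pos.mpr (sub_ne_zero.mpr hj)
    rw [adj] at h
    have hrest0 := (Finset.sum_eq_zero_iff_of_nonneg fun i _ => abs_nonneg (x i - z i)).mp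
      (show ∑ i ∈ Finset.univ.erase j, |x i - z i| = 0 by omega)
    refine ⟨j, z j, by omega, (update_eq_iff.mpr ⟨rfl, fun i hi => ?_⟩).symm⟩
    have := hrest0 i (Finset.mem_erase.mpr ⟨hi, Finset.mem_univ i⟩)
    rwa [abs_eq_zero, sub_eq_zero] at this
  · rintro ⟨j, c, hc, rfl⟩
    have := Fintype.sum_apply_update_add (fun i a => |x i - a|) x j c
    simpa [adj, hc] using this

theorem gd_le_stepLen_add (hαβ : α ≤ β) (h : adj x z) :
    gd α β x y ≤ stepLen α β x z + gd α β z y := by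
  obtain ⟨j, c, hc, rfl⟩ := adj_iff_exists_update.mp h
  have := gd_update_add α β (x := x) (y := y) j c
  have := lineDist_le_step α β (b := y j) hαβ hc
  rw [stepLen_update]
  linarith

theorem gd_le_pathLen (hαβ : α ≤ β) {p : List (Fin n → ℤ)} (hp : p.IsChain adj)
    (hx : p.head? = some x) (hy : p.getLast? = some y) : gd α β x y ≤ pathLen α β p := by
  induction hp generalizing x with
  | nil => simp at hx
  | singleton a =>
    simp only [List.head?_cons, List.getLast?_singleton, Option.some.injEq] at hx hy
    subst hx hy
    simp [pathLen, gd_self]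
  | @cons_cons a b l hab _ ih =>
    simp only [List.head?_cons, Option.some.injEq] at hx
    subst hx
    calc gd α β a y ≤ stepLen α β a b + gd α β b y := gd_le_stepLen_add α β hαβ hab
      _ ≤ stepLen α β a b + pathLen α β (b :: l) := by
        gcongr
        exact ih rfl (by simpa using hy)

theorem inGrid_update {k : ℕ} (hx : inGrid k x) (hy : inGrid k y) {j : Fin n} {c : ℤ}
    (hc : min (x j) (y j) ≤ c) (hc' : c ≤ max (x j) (y j)) : inGrid k (update x j c) := by
  refine (forall_update_iff x fun i a => 1 ≤ a ∧ a ≤ (k : ℤ)).mpr ⟨?_, fun i _ => hx i⟩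
  have := hx j
  have := hy j
  omega

theorem sum_natAbs_sub_update_lt {j : Fin n} {c : ℤ} (hc : x j ≠ c)
    (hc' : min (x j) (y j) ≤ c) (hc'' : c ≤ max (x j) (y j)) :
    ∑ i, (update x j c i - y i).natAbs < ∑ i, (x i - y i).natAbs := by
  have := Fintype.sum_apply_update_add (fun i a => (a - y i).natAbs) x j c
  omega

theorem exists_gridPath_pathLen_eq_gd {k : ℕ} (hx : inGrid k x) (hy : inGrid k y) :
    ∃ p : List (Fin n → ℤ), p.head? = some x ∧ p.getLast? = some y ∧
      (∀ z ∈ p, inGrid k z) ∧ p.IsChain adj ∧ pathLen α β p = gd α β x y := by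
  induction hN : ∑ i, (x i - y i).natAbs using Nat.strong_induction_on generalizing x with
  | _ N ih =>
  by_cases hxy : x = y
  · subst hxy
    exact ⟨[x], rfl, rfl, by simpa using hx, .singleton x, by simp [pathLen, gd_self]⟩
  obtain ⟨j, hj⟩ := ne_iff.mp hxy
  obtain ⟨c, hc, hcmin, hcmax⟩ := exists_unit_step_between hj
  have hcx : x j ≠ c := by rintro rfl; simp at hc
  obtain ⟨p, hpz, hpy, hpgrid, hpchain, hplen⟩ :=
    ih _ (hN ▸ sum_natAbs_sub_update_lt hcx hcmin hcmax) (inGrid_update hx hy hcmin hcmax) rfl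
  obtain ⟨rest, rfl⟩ := List.head?_eq_some_iff.mp hpz
  refine ⟨x :: update x j c :: rest, rfl, by simpa using hpy, List.forall_mem_cons.mpr ⟨hx, hpgrid⟩,
    .cons_cons (adj_iff_exists_update.mpr ⟨j, c, hc, rfl⟩) hpchain, ?_⟩
  have := gd_update_add α β (x := x) (y := y) j c
  have := lineDist_eq_step α β hc hcmin hcmax
  rw [pathLen, hplen, stepLen_update]
  linarith

end Grid

/-- The shortest-path distance from `x` to `y` in the directed grid graph equals
`β‖x - hcd(x,y)‖₁ - α‖y - hcd(x,y)‖₁`. -/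
theorem shortest_path_eq_formula {n k : ℕ} (α β : ℝ) (hαβ : α ≤ β)
    (x y : Fin n → ℤ) (hx : inGrid k x) (hy : inGrid k y) :
    IsLeast {L : ℝ | ∃ p : List (Fin n → ℤ),
        p.head? = some x ∧ p.getLast? = some y ∧
        (∀ z ∈ p, inGrid k z) ∧ p.Chain' adj ∧ pathLen α β p = L}
      (gd α β x y) := by
  refine ⟨exists_gridPath_pathLen_eq_gd α β hx hy, ?_⟩
  rintro L ⟨p, hpx, hpy, -, hp, rfl⟩
  exact gd_le_pathLen α β hαβ hp hpx hpy
end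

section
/- The pseudo-distance d on the hypergrid satisfies the triangle inequality: for all x, y, z in [k]^n, d(x,y) ≤ d(x,z) + d(z,y). -/
theorem posPart_add_le {G : Type*} [Lattice G] [AddCommGroup G] [IsOrderedAddMonoid G]
    (a b : G) : (a + b)⁺ ≤ a⁺ + b⁺ :=
  sup_le (add_le_add (le_posPart a) (le_posPart b))
    (add_nonneg (posPart_nonneg a) (posPart_nonneg b))

theorem sub_min_eq_posPart_sub {G : Type*} [AddCommGroup G] [LinearOrder G]
    [IsOrderedAddMonoid G] (a b : G) : a - min a b = (a - b)⁺ := by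
  rw [show min a b = a - (a - b)⁺ from inf_eq_sub_posPart_sub a b, sub_sub_cancel]

theorem gd_eq_posPart_add {n : ℕ} (α β : ℝ) (x y : Fin n → ℤ) :
    gd α β x y = (β - α) * ((∑ i, (x i - y i)⁺ : ℤ) : ℝ) + α * ((∑ i, (x i - y i) : ℤ) : ℝ) := by
  have hy (i : Fin n) : y i - hcd x y i = (x i - y i)⁺ - (x i - y i) := by
    rw [← sub_min_eq_posPart_sub]
    simp only [hcd]
    ring
  simp only [gd, hy]
  simp only [hcd, sub_min_eq_posPart_sub]
  push_cast
  rw [Finset.sum_sub_distrib]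
  ring

theorem gd_triangle_inequality_general {n : ℕ} (α β : ℝ) (hαβ : α ≤ β)
    (x y z : Fin n → ℤ) :
    gd α β x y ≤ gd α β x z + gd α β z y := by
  have hlinear : ∑ i, (x i - y i) = ∑ i, (x i - z i) + ∑ i, (z i - y i) := by
    rw [← Finset.sum_add_distrib]
    simp only [sub_add_sub_cancel]
  have hpos : ∑ i, (x i - y i)⁺ ≤ ∑ i, (x i - z i)⁺ + ∑ i, (z i - y i)⁺ := by
    rw [← Finset.sum_add_distrib]
    exact Finset.sum_le_sum fun i _ => sub_add_sub_cancel (x i) (z i) (y i) ▸ posPart_add_le _ _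
  have hpos' := mul_le_mul_of_nonneg_left (Int.cast_le (R := ℝ) |>.2 hpos) (sub_nonneg.2 hαβ)
  rw [gd_eq_posPart_add, gd_eq_posPart_add, gd_eq_posPart_add, hlinear]
  push_cast at hpos' ⊢
  linarith

/-- Triangle inequality for the pseudo-distance. -/
theorem gd_triangle_inequality {n k : ℕ} (α β : ℝ) (hαβ : α ≤ β)
    (x y z : Fin n → ℤ) (hx : inGrid k x) (hy : inGrid k y) (hz : inGrid k z) :
    gd α β x y ≤ gd α β x z + gd α β z y :=
  gd_triangle_inequality_general α β hαβ x y z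
end

section
/- The pseudo-distance d satisfies strict positivity on cycles: for any cycle of distinct points x₁, x₂, …, x_s, x_{s+1} = x₁ with s ≥ 2 and α < β, we have Σ_{c=1}^{s} d(x_c, x_{c+1}) > 0. -/
/-!
Write `excess x y = ∑ i, (x i - min (x i) (y i))` for the total amount by which `x` exceeds `y`.
Since `y - hcd x y = (x - hcd x y) + (y - x)`, we get
`d(x, y) = (β - α) · excess x y + α · (∑ x - ∑ y)`, and the second term telescopes to zero
around a cycle. So the cycle sum is `(β - α)` times a sum of nonnegative integers, and that sum
vanishes only if `x₁ ≤ x₂ ≤ ⋯ ≤ x_{s+1} = x₁` coordinatewise, forcing `x₁ = x₂`.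
-/

open Finset

section Cycle

variable {α : Type*} [PartialOrder α] {x : ℕ → α} {s : ℕ}

theorem eq_of_le_succ_of_cycle (hle : ∀ c < s, x c ≤ x (c + 1)) (hcyc : x s = x 0) :
    ∀ c ≤ s, x c = x 0 := by
  have hmono : MonotoneOn x (Set.Iic s) :=
    monotoneOn_of_le_succ Set.ordConnected_Iic fun c _ _ hc => by
      rw [Order.succ_eq_add_one] at hc ⊢
      exact hle c (Nat.lt_of_succ_le hc)
  intro c hc
  refine le_antisymm ?_ (hmono (Nat.zero_le s) hc (Nat.zero_le c))
  exact hcyc ▸ hmono hc (Set.mem_Iic.2 le_rfl) hc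

end Cycle

section Excess

variable {n : ℕ}

def excess (x y : Fin n → ℤ) : ℤ := ∑ i, (x i - hcd x y i)

theorem sub_hcd_nonneg (x y : Fin n → ℤ) (i : Fin n) : 0 ≤ x i - hcd x y i :=
  sub_nonneg.2 (min_le_left _ _)

theorem excess_nonneg (x y : Fin n → ℤ) : 0 ≤ excess x y :=
  sum_nonneg fun i _ => sub_hcd_nonneg x y i

theorem excess_eq_zero_iff {x y : Fin n → ℤ} : excess x y = 0 ↔ x ≤ y := by
  rw [excess, sum_eq_zero_iff_of_nonneg fun i _ => sub_hcd_nonneg x y i, Pi.le_def]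
  simp only [mem_univ, true_implies, sub_eq_zero, hcd, eq_comm (a := x _), min_eq_left_iff]

theorem gd_eq_excess (α β : ℝ) (x y : Fin n → ℤ) :
    gd α β x y = (β - α) * excess x y + α * ((∑ i, x i : ℤ) - (∑ i, y i : ℤ)) := by
  simp only [gd, excess, Int.cast_sum, Int.cast_sub, sum_sub_distrib]
  ring

theorem sum_gd_cycle (α β : ℝ) {x : ℕ → Fin n → ℤ} {s : ℕ} (hcyc : x s = x 0) :
    ∑ c ∈ range s, gd α β (x c) (x (c + 1)) =
      (β - α) * ∑ c ∈ range s, (excess (x c) (x (c + 1)) : ℝ) := by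
  simp only [gd_eq_excess, sum_add_distrib, ← mul_sum,
    sum_range_sub' (fun c => ((∑ i, x c i : ℤ) : ℝ)), hcyc, sub_self, mul_zero, add_zero]

theorem sum_excess_cycle_pos {x : ℕ → Fin n → ℤ} {s : ℕ} (hs : 0 < s) (hcyc : x s = x 0)
    (hne : x 0 ≠ x 1) : 0 < ∑ c ∈ range s, excess (x c) (x (c + 1)) := by
  refine (sum_nonneg fun c _ => excess_nonneg _ _).lt_of_ne fun hzero => hne ?_
  have hle : ∀ c < s, x c ≤ x (c + 1) := fun c hc =>
    excess_eq_zero_iff.1 <|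
      (sum_eq_zero_iff_of_nonneg fun c _ => excess_nonneg _ _).1 hzero.symm c (mem_range.2 hc)
  exact (eq_of_le_succ_of_cycle hle hcyc 1 hs).symm

end Excess

theorem gd_positive_on_cycles_general {n s : ℕ} (α β : ℝ) (hαβ : α < β) (hs : 2 ≤ s)
    (x : ℕ → (Fin n → ℤ))
    (hinj : ∀ c < s, ∀ c' < s, x c = x c' → c = c')
    (hcyc : x s = x 0) :
    0 < ∑ c ∈ Finset.range s, gd α β (x c) (x (c + 1)) := by
  have hne : x 0 ≠ x 1 := fun h => zero_ne_one (hinj 0 (by omega) 1 (by omega) h)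
  rw [sum_gd_cycle α β hcyc]
  exact mul_pos (sub_pos.2 hαβ) (mod_cast sum_excess_cycle_pos (by omega) hcyc hne)

/-- Strict positivity of the pseudo-distance on cycles of distinct points. -/
theorem gd_positive_on_cycles {n k s : ℕ} (α β : ℝ) (hαβ : α < β) (hs : 2 ≤ s)
    (x : ℕ → (Fin n → ℤ))
    (hinj : ∀ c < s, ∀ c' < s, x c = x c' → c = c')
    (hg : ∀ c < s, inGrid k (x c)) (hcyc : x s = x 0) :
    0 < ∑ c ∈ Finset.range s, gd α β (x c) (x (c + 1)) :=
  gd_positive_on_cycles_general α β hαβ hs x hinj hcyc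
end

section
/- A function f : [k]^n → ℝ is (α,β)-Lipschitz if and only if for all x, y in [k]^n, f(x) - f(y) ≤ d(x,y). -/
/-- `f` is `(α,β)`-Lipschitz on `[k]^n`: every unit increment of one
coordinate (staying inside the grid) changes `f` by an amount in `[α,β]`. -/
def IsABLip {n : ℕ} (k : ℕ) (α β : ℝ) (f : (Fin n → ℤ) → ℝ) : Prop :=
  ∀ (x : Fin n → ℤ) (i : Fin n), inGrid k x →
    inGrid k (Function.update x i (x i + 1)) →
      α ≤ f (Function.update x i (x i + 1)) - f x ∧
      f (Function.update x i (x i + 1)) - f x ≤ β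


/-!
Going up a monotone lattice path from `z ≤ x`, each unit step changes `f` by an amount in
`[α, β]`, so `f x - f z` lies between `α ‖x - z‖₁` and `β ‖x - z‖₁`. Routing any pair `x, y`
through `hcd x y` gives `f x - f y ≤ β ‖x - hcd x y‖₁ - α ‖y - hcd x y‖₁`. Conversely, for a
single unit step `gd` evaluates to `β` in one direction and `-α` in the other.
-/

open Finset Function

section UnitStep

variable {ι : Type*} [Fintype ι] [DecidableEq ι]

theorem sum_update_succ_sub (x : ι → ℤ) (i : ι) :
    ∑ j, (update x i (x i + 1) j - x j) = 1 := by
  rw [sum_eq_single i (fun j _ hj => by simp [update_of_ne hj]) (by simp)]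
  simp

theorem sum_sub_update_succ (w x : ι → ℤ) (i : ι) :
    ∑ j, (w j - update x i (x i + 1) j) = ∑ j, (w j - x j) - 1 := by
  calc ∑ j, (w j - update x i (x i + 1) j)
      = ∑ j, ((w j - x j) - (update x i (x i + 1) j - x j)) := sum_congr rfl fun j _ => by ring
    _ = ∑ j, (w j - x j) - 1 := by rw [sum_sub_distrib, sum_update_succ_sub]

end UnitStep

section Grid

variable {n k : ℕ}

theorem inGrid_of_le_of_le {x y z : Fin n → ℤ} (hx : inGrid k x) (hz : inGrid k z)
    (hxy : x ≤ y) (hyz : y ≤ z) : inGrid k y :=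
  fun i => ⟨(hx i).1.trans (hxy i), (hyz i).trans (hz i).2⟩

theorem hcd_le_left (x y : Fin n → ℤ) : hcd x y ≤ x := fun _ => min_le_left _ _

theorem hcd_le_right (x y : Fin n → ℤ) : hcd x y ≤ y := fun _ => min_le_right _ _

theorem inGrid_hcd {x y : Fin n → ℤ} (hx : inGrid k x) (hy : inGrid k y) :
    inGrid k (hcd x y) :=
  fun i => ⟨le_min (hx i).1 (hy i).1, (hcd_le_left x y i).trans (hx i).2⟩

theorem hcd_of_le {x y : Fin n → ℤ} (h : x ≤ y) : hcd x y = x :=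
  funext fun i => min_eq_left (h i)

theorem hcd_of_ge {x y : Fin n → ℤ} (h : y ≤ x) : hcd x y = y :=
  funext fun i => min_eq_right (h i)

theorem gd_of_le (α β : ℝ) {x y : Fin n → ℤ} (h : x ≤ y) :
    gd α β x y = -(α * ∑ i, ((y i - x i : ℤ) : ℝ)) := by
  simp [gd, hcd_of_le h]

theorem gd_of_ge (α β : ℝ) {x y : Fin n → ℤ} (h : y ≤ x) :
    gd α β x y = β * ∑ i, ((x i - y i : ℤ) : ℝ) := by
  simp [gd, hcd_of_ge h]

end Grid

theorem IsABLip.sub_mem_Icc_of_le {n k : ℕ} {α β : ℝ} {f : (Fin n → ℤ) → ℝ}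
    (hf : IsABLip k α β f) {x z : Fin n → ℤ} (hx : inGrid k x) (hz : inGrid k z)
    (hzx : z ≤ x) :
    f x - f z ∈ Set.Icc (α * ∑ i, ((x i - z i : ℤ) : ℝ)) (β * ∑ i, ((x i - z i : ℤ) : ℝ)) := by
  simp only [← Int.cast_sum]
  obtain ⟨N, hN⟩ : ∃ N : ℕ, ∑ i, (x i - z i) = N :=
    Int.eq_ofNat_of_zero_le (sum_nonneg fun i _ => sub_nonneg.2 (hzx i))
  rw [hN, Int.cast_natCast]
  induction N generalizing z with
  | zero =>
    have hzx_eq : z = x := funext fun i => by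
      have := (sum_eq_zero_iff_of_nonneg fun j _ => sub_nonneg.2 (hzx j)).1 hN i (mem_univ i)
      omega
    simp [hzx_eq]
  | succ N ih =>
    obtain ⟨i, hi⟩ : ∃ i, z i < x i := by
      by_contra! h
      simp [le_antisymm h hzx] at hN
      omega
    have hz'x : update z i (z i + 1) ≤ x := update_le_iff.2 ⟨hi, fun j _ => hzx j⟩
    have hz' : inGrid k (update z i (z i + 1)) := inGrid_of_le_of_le hz hx (by simp) hz'x
    have hstep := hf z i hz hz'
    have hpath := ih hz' hz'x
      (by rw [sum_sub_update_succ, hN]; push_cast; ring)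
    constructor <;> push_cast <;> linarith [hstep.1, hstep.2, hpath.1, hpath.2]

theorem isABLip_iff_le_gd_general {n k : ℕ} (α β : ℝ)
    (f : (Fin n → ℤ) → ℝ) :
    IsABLip k α β f ↔
      ∀ x y : Fin n → ℤ, inGrid k x → inGrid k y → f x - f y ≤ gd α β x y := by
  constructor
  · intro hf x y hx hy
    have hxm := hf.sub_mem_Icc_of_le hx (inGrid_hcd hx hy) (hcd_le_left x y)
    have hym := hf.sub_mem_Icc_of_le hy (inGrid_hcd hx hy) (hcd_le_right x y)
    rw [gd]
    linarith [hxm.2, hym.1]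
  · intro h x i hx hx'
    have hstep : x ≤ update x i (x i + 1) := by simp
    have hunit : ∑ j, ((update x i (x i + 1) j - x j : ℤ) : ℝ) = 1 := by
      exact_mod_cast sum_update_succ_sub x i
    have hup := h x _ hx hx'
    have hdown := h _ x hx' hx
    rw [gd_of_le α β hstep, hunit] at hup
    rw [gd_of_ge α β hstep, hunit] at hdown
    constructor <;> linarith

/-- `f` is `(α,β)`-Lipschitz iff `f(x) - f(y) ≤ d(x,y)` for all grid points. -/
theorem isABLip_iff_le_gd {n k : ℕ} (α β : ℝ) (hαβ : α ≤ β)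
    (f : (Fin n → ℤ) → ℝ) :
    IsABLip k α β f ↔
      ∀ x y : Fin n → ℤ, inGrid k x → inGrid k y → f x - f y ≤ gd α β x y :=
  isABLip_iff_le_gd_general α β f
end

section
/- For the monotonicity property: the minimum vertex cover of the violation graph (edges between comparable pairs x ≺ y with f(x) > f(y)) has size exactly ε_f · |D|, where ε_f is the distance of f to monotonicity. -/
/-!
On every violated pair a monotone `g` differs from `f` at one of the endpoints at least, so the
set where `f ≠ g` is a vertex cover of the violation graph. Conversely, given a vertex cover `U`, the
running maximum `g x = max {f z | z ∉ U, z ≤ x}` (padded with a global lower bound of `f`) is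
monotone and agrees with `f` off `U`, because no violated pair has both endpoints outside `U`.
-/

open Finset

theorem Monotone.ne_or_ne_of_violation {D β : Type*} [Preorder D] [Preorder β]
    {f g : D → β} (hg : Monotone g) {x y : D} (hxy : x ≤ y) (hf : f y < f x) :
    f x ≠ g x ∨ f y ≠ g y := by
  by_contra! h
  exact (hf.trans_le (h.1 ▸ h.2 ▸ hg hxy)).false

theorem exists_monotone_eq_of_notMem_cover {D β : Type*} [PartialOrder D] [Finite D]
    [LinearOrder β] [Nonempty β] (f : D → β) (U : Set D)
    (hU : ∀ x y, x < y → f y < f x → x ∈ U ∨ y ∈ U) :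
    ∃ g : D → β, Monotone g ∧ ∀ x ∉ U, g x = f x := by
  classical
  have := Fintype.ofFinite D
  obtain ⟨c, hc⟩ := Finite.exists_ge f
  have hf_mono_off : ∀ z x, z ∉ U → x ∉ U → z ≤ x → f z ≤ f x := by
    intro z x hz hx hzx
    rcases hzx.eq_or_lt with rfl | hlt
    · exact le_rfl
    · exact not_lt.1 fun h => (hU z x hlt h).elim hz hx
  let values (x : D) : Finset β := insert c ((univ.filter (fun z => z ∉ U ∧ z ≤ x)).image f)
  refine ⟨fun x => (values x).max' (insert_nonempty _ _), fun x y hxy => ?_, fun x hx => ?_⟩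
  · refine max'_subset _ (insert_subset_insert _ (image_subset_image fun z hz => ?_))
    simp only [mem_filter, mem_univ, true_and] at hz ⊢
    exact ⟨hz.1, hz.2.trans hxy⟩
  · refine le_antisymm (max'_le _ _ _ fun b hb => ?_) (le_max' _ _ ?_)
    · rcases mem_insert.1 hb with rfl | hb
      · exact hc x
      · obtain ⟨z, hz, rfl⟩ := mem_image.1 hb
        simp only [mem_filter, mem_univ, true_and] at hz
        exact hf_mono_off z x hz.1 hx hz.2
    · exact mem_insert_of_mem (mem_image_of_mem f (by simp [hx]))

/-- For monotonicity: minimum vertex cover of the violation graph equals the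
distance (number of modifications) to monotonicity. -/
theorem min_vertex_cover_eq_distance_monotone {n k : ℕ}
    (f : (Fin n → Fin k) → ℝ) :
    sInf {m : ℕ | ∃ U : Finset (Fin n → Fin k),
        (∀ x y : Fin n → Fin k, x < y → f y < f x → x ∈ U ∨ y ∈ U) ∧
        U.card = m} =
    sInf {m : ℕ | ∃ g : (Fin n → Fin k) → ℝ, Monotone g ∧
        Nat.card {x : Fin n → Fin k // f x ≠ g x} = m} := by
  classical
  have card_disagree (g : (Fin n → Fin k) → ℝ) :
      Nat.card {x // f x ≠ g x} = (univ.filter fun x => f x ≠ g x).card := by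
    rw [Nat.card_eq_fintype_card, Fintype.card_subtype]
  apply csInf_eq_csInf_of_forall_exists_le
  · rintro _ ⟨U, hU, rfl⟩
    obtain ⟨g, hg, hgU⟩ := exists_monotone_eq_of_notMem_cover f U hU
    refine ⟨_, ⟨g, hg, rfl⟩, (card_disagree g).trans_le (card_le_card fun x hx => ?_)⟩
    by_contra hxU
    exact (mem_filter.1 hx).2 (hgU x hxU).symm
  · rintro _ ⟨g, hg, rfl⟩
    refine ⟨_, ⟨univ.filter fun x => f x ≠ g x, fun x y hxy hf => ?_, rfl⟩, (card_disagree g).ge⟩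
    simpa using hg.ne_or_ne_of_violation hxy.le hf
end
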